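/- Let n ≥ 1, let b_1 ≥ ... ≥ b_n be integers with b_i - b_{i+1} ≤ 1 for all i (no gap), set c_1 = Σ b_i, and let c_2 be an integer with c_2 ≥ Σ_{i<j} b_i b_j. Then 12·(2n·c_2 - (n-1)·c_1²) ≥ -n²(n²-1). -/
import Mathlib

open Finset

lemma sum_range_cast_two (n : ℕ) : 2 * ∑ i ∈ Finset.range n, (i : ℤ) = n * (n - 1) := by
  induction n with
  | zero => simp
  | succ m ih =>
    rw [Finset.sum_range_succ]
    push_cast
    push_cast at ih
    ring_nf
    ring_nf at ih
    linarith

lemma sum_range_cast_sq (n : ℕ) :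
    6 * ∑ i ∈ Finset.range n, (i : ℤ) ^ 2 = n * (n - 1) * (2 * n - 1) := by
  induction n with
  | zero => simp
  | succ m ih =>
    rw [Finset.sum_range_succ]
    push_cast
    push_cast at ih
    ring_nf
    ring_nf at ih
    linarith

lemma expand_sum {n : ℕ} (f : Fin n → ℤ) :
    ∑ i : Fin n, ∑ j : Fin n, (f i - f j) ^ 2
      = 2 * n * (∑ i : Fin n, (f i) ^ 2) - 2 * (∑ i : Fin n, f i) ^ 2 := by
  have h : ∀ i : Fin n, ∑ j : Fin n, (f i - f j) ^ 2
      = n * (f i) ^ 2 - 2 * f i * (∑ j : Fin n, f j) + ∑ j : Fin n, (f j) ^ 2 := by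
    intro i
    have : ∀ j : Fin n, (f i - f j) ^ 2 = (f i)^2 - 2 * f i * f j + (f j)^2 := by
      intro j; ring
    rw [Finset.sum_congr rfl (fun j _ => this j)]
    rw [Finset.sum_add_distrib, Finset.sum_sub_distrib, Finset.sum_const,
      ← Finset.mul_sum]
    simp [Finset.card_univ, mul_comm]
  rw [Finset.sum_congr rfl (fun i _ => h i)]
  rw [Finset.sum_add_distrib, Finset.sum_sub_distrib, Finset.sum_const,
    ← Finset.mul_sum]
  have hs : ∑ i : Fin n, (n : ℤ) * (f i) ^ 2 = n * ∑ i : Fin n, (f i) ^ 2 := by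
    rw [← Finset.mul_sum]
  have ht : ∑ i : Fin n, 2 * f i * (∑ j : Fin n, f j)
      = 2 * (∑ i : Fin n, f i) ^ 2 := by
    rw [← Finset.sum_mul, ← Finset.mul_sum]
    ring
  rw [ht]
  simp only [Finset.card_univ, Fintype.card_fin, nsmul_eq_mul]
  push_cast
  ring

lemma split_square {n : ℕ} (b : Fin n → ℤ) :
    (∑ i : Fin n, b i) ^ 2
      = 2 * (∑ i : Fin n, ∑ j : Fin n, if i < j then b i * b j else 0)
        + ∑ i : Fin n, (b i) ^ 2 := by
  have h0 : (∑ i : Fin n, b i) ^ 2 = ∑ i : Fin n, ∑ j : Fin n, b i * b j := by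
    rw [sq, Finset.sum_mul_sum]
  have hpt : ∀ i j : Fin n, b i * b j =
      (if i < j then b i * b j else 0) + (if j < i then b i * b j else 0)
        + (if i = j then b i * b j else 0) := by
    intro i j
    rcases lt_trichotomy i j with h | h | h
    · simp [h, not_lt_of_gt h, h.ne]
    · simp [h]
    · simp [h, not_lt_of_gt h, h.ne']
  have h1 : ∑ i : Fin n, ∑ j : Fin n, b i * b j
      = (∑ i : Fin n, ∑ j : Fin n, if i < j then b i * b j else 0)
        + (∑ i : Fin n, ∑ j : Fin n, if j < i then b i * b j else 0)
        + (∑ i : Fin n, ∑ j : Fin n, if i = j then b i * b j else 0) := by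
    simp_rw [← Finset.sum_add_distrib]
    exact Finset.sum_congr rfl fun i _ => Finset.sum_congr rfl fun j _ => hpt i j
  have h2 : (∑ i : Fin n, ∑ j : Fin n, if j < i then b i * b j else 0)
      = ∑ i : Fin n, ∑ j : Fin n, if i < j then b i * b j else 0 := by
    rw [Finset.sum_comm]
    refine Finset.sum_congr rfl fun i _ => Finset.sum_congr rfl fun j _ => ?_
    by_cases h : i < j <;> simp [h, mul_comm]
  have h3 : (∑ i : Fin n, ∑ j : Fin n, if i = j then b i * b j else 0)
      = ∑ i : Fin n, (b i) ^ 2 := by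
    refine Finset.sum_congr rfl fun i _ => ?_
    rw [Finset.sum_ite_eq]
    simp [sq]
  rw [h0, h1, h2, h3]; ring

lemma gap_bound {n : ℕ} (b : Fin n → ℤ) (hb : Antitone b)
    (hgap : ∀ i : Fin n, ∀ j : Fin n, (j : ℕ) = (i : ℕ) + 1 → b i - b j ≤ 1) :
    ∀ k : ℕ, ∀ i j : Fin n, (j : ℕ) = (i : ℕ) + k → b i - b j ≤ k := by
  intro k
  induction k with
  | zero =>
    intro i j h
    have : i = j := Fin.ext (by omega)
    simp [this]
  | succ m ih =>
    intro i j h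
    have hm : (i : ℕ) + 1 < n := by
      have := j.isLt; omega
    set m' : Fin n := ⟨(i : ℕ) + 1, hm⟩ with hm'
    have h1 : b i - b m' ≤ 1 := hgap i m' rfl
    have h2 : b m' - b j ≤ m := ih m' j (by simp [hm']; omega)
    push_cast
    linarith

theorem stmt_4 (n : ℕ) (hn : 0 < n) (b : Fin n → ℤ) (hb : Antitone b)
    (hgap : ∀ i : Fin n, ∀ j : Fin n, (j : ℕ) = (i : ℕ) + 1 → b i - b j ≤ 1)
    (c₂ : ℤ) (hc : c₂ ≥ ∑ i : Fin n, ∑ j : Fin n, if i < j then b i * b j else 0) :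
    12 * (2 * (n : ℤ) * c₂ - ((n : ℤ) - 1) * (∑ i : Fin n, b i) ^ 2) ≥
      -((n : ℤ) ^ 2 * ((n : ℤ) ^ 2 - 1)) := by
  set S := ∑ i : Fin n, b i with hS
  set Q := ∑ i : Fin n, (b i) ^ 2 with hQ
  set P := ∑ i : Fin n, ∑ j : Fin n, if i < j then b i * b j else 0 with hP
  have h1 : S ^ 2 = 2 * P + Q := split_square b
  have h2 : ∑ i : Fin n, ∑ j : Fin n, (b i - b j) ^ 2 = 2 * n * Q - 2 * S ^ 2 :=
    expand_sum b
  -- pointwise bound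
  have hbd : ∀ i j : Fin n, (b i - b j) ^ 2 ≤ ((i : ℤ) - (j : ℤ)) ^ 2 := by
    intro i j
    rcases le_total i j with h | h
    · have hle := gap_bound b hb hgap ((j : ℕ) - (i : ℕ)) i j (by omega)
      have hge : 0 ≤ b i - b j := sub_nonneg.2 (hb h)
      have hij : (i : ℕ) ≤ (j : ℕ) := h
      have hle : b i - b j ≤ (j : ℤ) - (i : ℤ) := by
        refine hle.trans_eq ?_
        omega
      have := sq_le_sq' (by linarith) hle
      calc (b i - b j) ^ 2 ≤ ((j : ℤ) - (i : ℤ)) ^ 2 := this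
        _ = ((i : ℤ) - (j : ℤ)) ^ 2 := by ring
    · have hle := gap_bound b hb hgap ((i : ℕ) - (j : ℕ)) j i (by omega)
      have hge : 0 ≤ b j - b i := sub_nonneg.2 (hb h)
      have hij : (j : ℕ) ≤ (i : ℕ) := h
      have hle : b j - b i ≤ (i : ℤ) - (j : ℤ) := by
        refine hle.trans_eq ?_
        omega
      have h' := sq_le_sq' (by linarith) hle
      calc (b i - b j) ^ 2 = (b j - b i) ^ 2 := by ring
        _ ≤ ((i : ℤ) - (j : ℤ)) ^ 2 := h'
  have hsum : ∑ i : Fin n, ∑ j : Fin n, (b i - b j) ^ 2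
      ≤ ∑ i : Fin n, ∑ j : Fin n, ((i : ℤ) - (j : ℤ)) ^ 2 :=
    Finset.sum_le_sum fun i _ => Finset.sum_le_sum fun j _ => hbd i j
  -- compute the coefficient sum
  have h3 : ∑ i : Fin n, ∑ j : Fin n, ((i : ℤ) - (j : ℤ)) ^ 2
      = 2 * n * (∑ i : Fin n, ((i : ℤ)) ^ 2) - 2 * (∑ i : Fin n, ((i : ℤ))) ^ 2 :=
    expand_sum (fun i => (i : ℤ))
  have h4 : ∑ i : Fin n, ((i : ℤ)) = ∑ i ∈ Finset.range n, (i : ℤ) := by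
    rw [Fin.sum_univ_eq_sum_range]
  have h5 : ∑ i : Fin n, ((i : ℤ)) ^ 2 = ∑ i ∈ Finset.range n, (i : ℤ) ^ 2 :=
    Fin.sum_univ_eq_sum_range (fun i => ((i : ℤ)) ^ 2) n
  have hA := sum_range_cast_two n
  have hB := sum_range_cast_sq n
  have h6 : 12 * (∑ i : Fin n, ∑ j : Fin n, ((i : ℤ) - (j : ℤ)) ^ 2)
      = 2 * (n : ℤ) ^ 2 * ((n : ℤ) ^ 2 - 1) := by
    rw [h3, h4, h5]
    nlinarith [hA, hB]
  have hnpos : (1 : ℤ) ≤ (n : ℤ) := by exact_mod_cast hn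
  have hmul : 0 ≤ (n : ℤ) * (c₂ - P) :=
    mul_nonneg (by linarith) (sub_nonneg.2 hc)
  have h1' : (n : ℤ) * S ^ 2 = (n : ℤ) * (2 * P + Q) := by rw [h1]
  linarith [hsum, h2, h1, h1', h6, hmul]
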